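/- arXiv:2108.01868 — 11 statements merged into one kernel-verified Lean document; each statement's English description precedes it below -/
import Mathlib

section
/- Let R be a local domain with fraction field K. The collection of sets {αR + β : α ∈ K×, β ∈ K} forms a basis of open sets for a non-discrete Hausdorff ring topology on K in which multiplication by any nonzero element and translation by any element are homeomorphisms. -/
/-!
The submodules `αR`, `α ∈ Kˣ`, form a basis of neighbourhoods of zero for a ring topology:
any two of them contain a common `γR` with `γ ≠ 0` (clear the denominator of `β⁻¹α`),
some `γR` with `γ ∈ αR ∩ R` satisfies `γR · γR ⊆ αR`, and `x · (x⁻¹α)R = αR`.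
The translates `αR + β` are then a basis of the topology. It is Hausdorff because a nonzero
nonunit `t` of `R` gives `x ∉ (tx)R` for every `x ≠ 0`, and it is not discrete since no `αR`
is zero.
-/

open Pointwise TopologicalSpace

namespace RingSubgroupsBasis

variable {A ι : Type*} [Ring A] [Nonempty ι] {B : ι → AddSubgroup A} (hB : RingSubgroupsBasis B)

theorem isTopologicalBasis_translates :
    @IsTopologicalBasis A hB.topology {U | ∃ i a, U = {b | b - a ∈ B i}} := by
  let := hB.topology
  refine isTopologicalBasis_of_isOpen_of_nhds ?_ fun a U ha hU => ?_
  · rintro _ ⟨i, a, rfl⟩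
    refine isOpen_iff_mem_nhds.2 fun b hb => (hB.hasBasis_nhds b).mem_iff.2 ⟨i, trivial, ?_⟩
    intro c hc
    simpa using (B i).add_mem hc hb
  · obtain ⟨i, -, hi⟩ := (hB.hasBasis_nhds a).mem_iff.1 (hU.mem_nhds ha)
    exact ⟨_, ⟨i, a, rfl⟩, by simp, hi⟩

theorem t2Space (h : ∀ x ≠ 0, ∃ i, x ∉ B i) : @T2Space A hB.topology := by
  let := hB.topology
  have := hB.toRingFilterBasis.isTopologicalRing
  refine IsTopologicalAddGroup.t2Space_of_zero_sep fun x hx => ?_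
  obtain ⟨i, hi⟩ := h x hx
  exact ⟨B i, hB.hasBasis_nhds_zero.mem_of_mem trivial, hi⟩

theorem not_discreteTopology (h : ∀ i, ∃ x ∈ B i, x ≠ 0) : ¬@DiscreteTopology A hB.topology := by
  let := hB.topology
  intro _
  obtain ⟨i, -, hi⟩ := hB.hasBasis_nhds_zero.mem_iff.1 ((isOpen_discrete {0}).mem_nhds rfl)
  obtain ⟨x, hx, hx0⟩ := h i
  exact hx0 (hi hx)

end RingSubgroupsBasis

section FractionRing

variable (R : Type*) {K : Type*} [CommRing R] [Field K] [Algebra R K]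

theorem setOf_eq_mul_algebraMap_add (α β : K) :
    {x : K | ∃ r : R, x = α * algebraMap R K r + β} = {x | x - β ∈ R ∙ α} := by
  ext x
  simp [Submodule.mem_span_singleton, Algebra.smul_def, sub_eq_iff_eq_add, mul_comm, eq_comm]

variable [IsFractionRing R K]

theorem exists_ne_zero_mem_span_singleton_inf {α β : K} (hα : α ≠ 0) (hβ : β ≠ 0) :
    ∃ γ ≠ 0, γ ∈ R ∙ α ⊓ R ∙ β := by
  have := (algebraMap R K).domain_nontrivial
  obtain ⟨⟨a, b⟩, hab⟩ := IsLocalization.surj (nonZeroDivisors R) (β⁻¹ * α)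
  have hb := IsFractionRing.to_map_ne_zero_of_mem_nonZeroDivisors (K := K) b.2
  refine ⟨(b : R) • α, ?_, Submodule.smul_mem _ _ (Submodule.mem_span_singleton_self α), ?_⟩
  · rw [Algebra.smul_def]
    exact mul_ne_zero hb hα
  · refine Submodule.mem_span_singleton.2 ⟨a, ?_⟩
    rw [Algebra.smul_def, Algebra.smul_def, ← hab]
    field_simp

theorem submodulesRingBasis_span_singleton :
    SubmodulesRingBasis fun α : Kˣ => R ∙ (α : K) where
  inter α β := by
    obtain ⟨γ, hγ, hmem⟩ := exists_ne_zero_mem_span_singleton_inf R α.ne_zero β.ne_zero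
    exact ⟨Units.mk0 γ hγ, (Submodule.span_singleton_le_iff_mem _ _).2 hmem⟩
  leftMul a α := by
    rcases eq_or_ne a 0 with rfl | ha
    · exact ⟨α, by simp⟩
    · refine ⟨(Units.mk0 a ha)⁻¹ * α, ?_⟩
      simp [Submodule.smul_span, ha]
  mul α := by
    obtain ⟨γ, hγ, hα, h1⟩ := exists_ne_zero_mem_span_singleton_inf R α.ne_zero one_ne_zero
    refine ⟨Units.mk0 γ hγ, ?_⟩
    rintro _ ⟨x, hx, y, hy, rfl⟩
    obtain ⟨s, rfl⟩ := Submodule.mem_span_singleton.1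
      ((Submodule.span_singleton_le_iff_mem _ _).2 h1 hy)
    change x * s • 1 ∈ R ∙ (α : K)
    rw [mul_smul_comm, mul_one]
    exact Submodule.smul_mem _ _ ((Submodule.span_singleton_le_iff_mem _ _).2 hα hx)

theorem exists_notMem_span_singleton (hR : ¬IsField R) {x : K} (hx : x ≠ 0) :
    ∃ α : Kˣ, x ∉ R ∙ (α : K) := by
  have := (algebraMap R K).domain_nontrivial
  obtain ⟨t, ht0, ht⟩ := Ring.exists_not_isUnit_of_not_isField hR
  have hft : algebraMap R K t ≠ 0 :=
    (map_ne_zero_iff _ (IsFractionRing.injective R K)).2 ht0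
  refine ⟨Units.mk0 (algebraMap R K t * x) (mul_ne_zero hft hx), fun hmem => ht ?_⟩
  obtain ⟨r, hr⟩ := Submodule.mem_span_singleton.1 hmem
  refine IsUnit.of_mul_eq_one (a := t) r (IsFractionRing.injective R K ?_)
  rw [Units.val_mk0, Algebra.smul_def] at hr
  apply mul_right_cancel₀ hx
  rw [map_mul, map_one, one_mul]
  linear_combination hr

end FractionRing

theorem stmt0_general (R K : Type*) [CommRing R] (hR : ¬ IsField R)
    [Field K] [Algebra R K] [IsFractionRing R K] :
    ∃ τ : TopologicalSpace K,
      @TopologicalSpace.IsTopologicalBasis K τ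
        {U : Set K | ∃ α β : K, α ≠ 0 ∧
          U = {x : K | ∃ r : R, x = α * algebraMap R K r + β}} ∧
      @IsTopologicalRing K τ _ ∧ @T2Space K τ ∧ ¬ @DiscreteTopology K τ ∧
      ∀ α β : K, α ≠ 0 → @IsHomeomorph K K τ τ (fun x => α * x + β) := by
  have hB := (submodulesRingBasis_span_singleton R (K := K)).toRing_subgroups_basis
  let := hB.topology
  have := hB.toRingFilterBasis.isTopologicalRing
  refine ⟨hB.topology, ?_, inferInstance,
    hB.t2Space fun x hx => exists_notMem_span_singleton R hR hx,
    hB.not_discreteTopology fun α => ⟨α, Submodule.mem_span_singleton_self _, α.ne_zero⟩,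
    fun α β hα => ((Homeomorph.mulLeft₀ α hα).trans (Homeomorph.addRight β)).isHomeomorph⟩
  convert hB.isTopologicalBasis_translates using 1
  ext U
  simp only [setOf_eq_mul_algebraMap_add]
  constructor
  · rintro ⟨α, β, hα, rfl⟩
    exact ⟨Units.mk0 α hα, β, rfl⟩
  · rintro ⟨α, β, rfl⟩
    exact ⟨α, β, α.ne_zero, rfl⟩

/-- For a local domain `R` with fraction field `K`, the collection of sets
`{αR + β : α ∈ Kˣ, β ∈ K}` is a basis for a non-discrete Hausdorff ring topology on `K`
in which `x ↦ αx + β` (for `α ≠ 0`) is a homeomorphism. -/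
theorem stmt0 (R K : Type*) [CommRing R] [IsDomain R] [IsLocalRing R] (hR : ¬ IsField R)
    [Field K] [Algebra R K] [IsFractionRing R K] :
    ∃ τ : TopologicalSpace K,
      @TopologicalSpace.IsTopologicalBasis K τ
        {U : Set K | ∃ α β : K, α ≠ 0 ∧
          U = {x : K | ∃ r : R, x = α * algebraMap R K r + β}} ∧
      @IsTopologicalRing K τ _ ∧ @T2Space K τ ∧ ¬ @DiscreteTopology K τ ∧
      ∀ α β : K, α ≠ 0 → @IsHomeomorph K K τ τ (fun x => α * x + β) :=
  stmt0_general R K hR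
end

section
/- Let R be a local domain with fraction field K, and suppose v, v* : K× → ℤ are group homomorphisms that are both non-negative on R \ {0}, and some β ∈ K× satisfies v(β) < 0 < v*(β). Then there is no c ∈ K× with the property that for all x, y ∈ K×, xy ∈ cR implies x ∈ R or y ∈ R. -/
/-!
Pick `n ≥ 1` with `n · v*(β) > v*(c)`. Then `x = βⁿ` and `y = c / βⁿ` have product `c ∈ cR`, yet
`v(x) = n · v(β) < 0` and `v*(y) = v*(c) - n · v*(β) < 0`, so neither lies in `R`, on which both
`v` and `v*` are non-negative.
-/

section MulOnNonzero

variable {K : Type*} [GroupWithZero K] {w : K → ℤ}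
  (hw : ∀ x y : K, x ≠ 0 → y ≠ 0 → w (x * y) = w x + w y)
include hw

theorem map_one_of_map_mul_eq_add : w 1 = 0 := by
  simpa using hw 1 1 one_ne_zero one_ne_zero

theorem map_pow_of_map_mul_eq_add {x : K} (hx : x ≠ 0) (n : ℕ) : w (x ^ n) = n * w x := by
  induction n with
  | zero => simpa using map_one_of_map_mul_eq_add hw
  | succ k ih =>
    rw [pow_succ, hw _ _ (pow_ne_zero k hx) hx, ih]
    push_cast
    ring

theorem map_inv_of_map_mul_eq_add {x : K} (hx : x ≠ 0) : w x⁻¹ = -w x := by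
  have h := hw x x⁻¹ hx (inv_ne_zero hx)
  rw [mul_inv_cancel₀ hx, map_one_of_map_mul_eq_add hw] at h
  omega

theorem map_div_of_map_mul_eq_add {x y : K} (hx : x ≠ 0) (hy : y ≠ 0) :
    w (x / y) = w x - w y := by
  rw [div_eq_mul_inv, hw _ _ hx (inv_ne_zero hy), map_inv_of_map_mul_eq_add hw hy]
  ring

end MulOnNonzero

theorem not_exists_algebraMap_eq_of_neg {R K : Type*} [CommSemiring R] [Semiring K] [Algebra R K]
    {w : K → ℤ} (hwR : ∀ r : R, r ≠ 0 → 0 ≤ w (algebraMap R K r)) {x : K} (hx0 : x ≠ 0)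
    (hx : w x < 0) : ¬ ∃ r : R, x = algebraMap R K r := by
  rintro ⟨r, rfl⟩
  have hr : r ≠ 0 := by
    rintro rfl
    exact hx0 (map_zero _)
  exact (hwR r hr).not_gt hx

theorem exists_pos_lt_mul_of_pos (a : ℤ) {b : ℤ} (hb : 0 < b) : ∃ n : ℕ, 0 < n ∧ a < n * b :=
  ⟨a.toNat + 1, Nat.succ_pos _, by
    push_cast
    nlinarith [Int.self_le_toNat a]⟩

theorem stmt1_general (R K : Type*) [CommRing R]
    [Field K] [Algebra R K]
    (v vstar : K → ℤ)
    (hv : ∀ x y : K, x ≠ 0 → y ≠ 0 → v (x * y) = v x + v y)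
    (hvstar : ∀ x y : K, x ≠ 0 → y ≠ 0 → vstar (x * y) = vstar x + vstar y)
    (hvR : ∀ r : R, r ≠ 0 → 0 ≤ v (algebraMap R K r) ∧ 0 ≤ vstar (algebraMap R K r))
    (β : K) (hβ0 : β ≠ 0) (hβ : v β < 0 ∧ 0 < vstar β) :
    ¬ ∃ c : K, c ≠ 0 ∧ ∀ x y : K, x ≠ 0 → y ≠ 0 →
        (∃ r : R, x * y = c * algebraMap R K r) →
        (∃ r : R, x = algebraMap R K r) ∨ (∃ r : R, y = algebraMap R K r) := by
  rintro ⟨c, hc0, hc⟩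
  obtain ⟨n, hn, hcn⟩ := exists_pos_lt_mul_of_pos (vstar c) hβ.2
  have hβn : β ^ n ≠ 0 := pow_ne_zero n hβ0
  have hy0 : c / β ^ n ≠ 0 := div_ne_zero hc0 hβn
  have hx : v (β ^ n) < 0 := by
    rw [map_pow_of_map_mul_eq_add hv hβ0]
    exact mul_neg_of_pos_of_neg (by exact_mod_cast hn) hβ.1
  have hy : vstar (c / β ^ n) < 0 := by
    rw [map_div_of_map_mul_eq_add hvstar hc0 hβn, map_pow_of_map_mul_eq_add hvstar hβ0]
    omega
  have hxy : β ^ n * (c / β ^ n) = c * algebraMap R K 1 := by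
    rw [map_one, mul_one, mul_div_cancel₀ c hβn]
  rcases hc (β ^ n) (c / β ^ n) hβn hy0 ⟨1, hxy⟩ with hxR | hyR
  · exact not_exists_algebraMap_eq_of_neg (fun r hr ↦ (hvR r hr).1) hβn hx hxR
  · exact not_exists_algebraMap_eq_of_neg (fun r hr ↦ (hvR r hr).2) hy0 hy hyR

/-- If `R` is a local domain with fraction field `K`, `v, v*` are group
homomorphisms `Kˣ → ℤ` non-negative on `R \ {0}`, and some `β ∈ Kˣ` has `v β < 0 < v* β`,
then there is no `c ∈ Kˣ` such that `xy ∈ cR` implies `x ∈ R` or `y ∈ R`. -/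
theorem stmt1 (R K : Type*) [CommRing R] [IsDomain R] [IsLocalRing R] (hR : ¬ IsField R)
    [Field K] [Algebra R K] [IsFractionRing R K]
    (v vstar : K → ℤ)
    (hv : ∀ x y : K, x ≠ 0 → y ≠ 0 → v (x * y) = v x + v y)
    (hvstar : ∀ x y : K, x ≠ 0 → y ≠ 0 → vstar (x * y) = vstar x + vstar y)
    (hvR : ∀ r : R, r ≠ 0 → 0 ≤ v (algebraMap R K r) ∧ 0 ≤ vstar (algebraMap R K r))
    (β : K) (hβ0 : β ≠ 0) (hβ : v β < 0 ∧ 0 < vstar β) :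
    ¬ ∃ c : K, c ≠ 0 ∧ ∀ x y : K, x ≠ 0 → y ≠ 0 →
        (∃ r : R, x * y = c * algebraMap R K r) →
        (∃ r : R, x = algebraMap R K r) ∨ (∃ r : R, y = algebraMap R K r) :=
  stmt1_general R K v vstar hv hvstar hvR β hβ0 hβ
end

section
/- Let R be a Henselian local domain with maximal ideal m. Suppose g ∈ R[x] and α ∈ R satisfy g'(α) ≠ 0 and g(α) ≡ 0 (mod g'(α)²·m). Then there exists α* ∈ R with g(α*) = 0 and α* − α ∈ (g(α)/g'(α))·R. -/
/-!
Write `c = g'(α)` and `g(α) = c² m` with `m ∈ 𝔪`. The Taylor expansion of `g` at `α` gives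
`g(α + c t) = c² f(t)` with `f(t) = m + t + t² (…)`, so `f(0) ∈ 𝔪` and `f'(0) = 1`, and Hensel's
lemma gives a root `t ∈ m R` of `f`; then `α* = α + c t`.

The Henselian property only speaks about monic polynomials. For an arbitrary `p` with
`p(a) = e ∈ 𝔪` and `p'(a) u = 1`, the substitution `x = a + e u T` turns `p` into
`e (1 + T + T² s(T))` with `s ≡ 0 mod 𝔪`; the reversal of `1 + T + T² s(T)` is monic with reduction
`X^(n+2) + X^(n+1)`, which has the simple root `-1`, and the inverse of its lift is the wanted root.
-/

open Polynomial

section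

open IsLocalRing

variable {R : Type*} [CommRing R]

theorem Polynomial.exists_eval_add_eq_add_mul_add_sq_mul (p : R[X]) (a : R) :
    ∃ q : R[X], ∀ x, p.eval (a + x) =
      p.eval a + (derivative p).eval a * x + x ^ 2 * q.eval x := by
  obtain ⟨q, hq⟩ : X ^ 2 ∣ taylor a p - C (p.eval a) - C ((derivative p).eval a) * X := by
    refine X_pow_dvd_iff.mpr fun d hd => ?_
    interval_cases d <;> simp [taylor_coeff_zero, taylor_coeff_one]
  refine ⟨q, fun x => ?_⟩
  have hx := congrArg (eval x) hq
  simp only [eval_sub, eval_mul, eval_C, eval_X, eval_pow, taylor_eval] at hx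
  rw [add_comm a]
  linear_combination hx

namespace HenselianLocalRing

variable [HenselianLocalRing R]

theorem exists_isUnit_isRoot_of_map_residue {H : R[X]} (hH : H.Monic) {n : ℕ}
    (hmap : H.map (residue R) = X ^ (n + 2) + X ^ (n + 1)) : ∃ a, IsUnit a ∧ H.IsRoot a := by
  have hres (x : R) : residue R (H.eval x) = (X ^ (n + 2) + X ^ (n + 1)).eval (residue R x) := by
    rw [← hmap, eval_map_apply]
  have hres' (x : R) : residue R ((derivative H).eval x) =
      (derivative (X ^ (n + 2) + X ^ (n + 1))).eval (residue R x) := by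
    rw [← hmap, derivative_map, eval_map_apply]
  obtain ⟨a, hroot, ha⟩ := is_henselian H hH (-1)
    (by rw [← residue_eq_zero_iff, hres]; simp [pow_succ])
    (by
      rw [← residue_ne_zero_iff_isUnit, hres']
      simp only [derivative_add, derivative_X_pow, eval_add, eval_mul, eval_pow,
        eval_C, eval_X, map_neg, map_one, Nat.add_sub_cancel, Nat.cast_add, Nat.cast_ofNat,
        Nat.cast_one, show n + 2 - 1 = n + 1 from rfl]
      have hpow : (-1 : ResidueField R) ^ n ≠ 0 := pow_ne_zero n (neg_ne_zero.mpr one_ne_zero)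
      convert neg_ne_zero.mpr hpow using 1
      ring)
  refine ⟨a, ?_, hroot⟩
  rw [← residue_ne_zero_iff_isUnit]
  rw [← residue_eq_zero_iff, map_sub, sub_eq_zero] at ha
  simp [ha]

theorem exists_isRoot_one_add_X_add_X_sq_mul {s : R[X]} (hs : s.map (residue R) = 0) :
    ∃ t, (1 + X + X ^ 2 * s).IsRoot t := by
  set h : R[X] := 1 + X + X ^ 2 * s
  set n := h.natDegree
  have hdeg : h.natDegree ≤ n + 2 := by omega
  have hmonic : (reflect (n + 2) h).Monic := by
    refine monic_of_natDegree_le_of_coeff_eq_one (n + 2) (natDegree_reflect_le.trans (by omega)) ?_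
    simp [coeff_reflect, h]
  have hmap : (reflect (n + 2) h).map (residue R) = X ^ (n + 2) + X ^ (n + 1) := by
    rw [← reflect_map]
    simp only [h, Polynomial.map_add, Polynomial.map_mul, Polynomial.map_one, Polynomial.map_X,
      hs, mul_zero, add_zero, reflect_add, reflect_one]
    simpa [revAt_le] using reflect_monomial (R := ResidueField R) (n + 2) 1
  obtain ⟨a, ha, hroot⟩ := exists_isUnit_isRoot_of_map_residue hmonic hmap
  have := ha.invertible
  refine ⟨⅟a, ?_⟩
  have key := eval₂_reflect_mul_pow (RingHom.id R) (⅟a) (n + 2) h hdeg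
  rw [invOf_invOf, eval₂_id, eval₂_id, hroot.eq_zero, zero_mul] at key
  exact key.symm

theorem exists_isRoot_dvd_sub {p : R[X]} {a : R} (ha : p.eval a ∈ maximalIdeal R)
    (hu : IsUnit ((derivative p).eval a)) : ∃ b, p.IsRoot b ∧ p.eval a ∣ b - a := by
  obtain ⟨q, hq⟩ := p.exists_eval_add_eq_add_mul_add_sq_mul a
  obtain ⟨u, hu⟩ := hu.exists_right_inv
  set e := p.eval a
  set s : R[X] := C (e * u ^ 2) * q.comp (C (e * u) * X)
  have hs : s.map (residue R) = 0 := by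
    simp [s, (residue_eq_zero_iff e).mpr ha]
  obtain ⟨t, ht⟩ := exists_isRoot_one_add_X_add_X_sq_mul hs
  -- `p (a + e u t) = e * (1 + t + t ^ 2 * s t)` since `p'(a) u = 1`
  refine ⟨a + e * u * t, ?_, ⟨u * t, by ring⟩⟩
  have hst : 1 + t + t ^ 2 * s.eval t = 0 := by simpa using ht
  simp only [s, eval_mul, eval_C, eval_comp, eval_X] at hst
  rw [IsRoot, hq]
  linear_combination e * hst + e * t * hu

end HenselianLocalRing

end

theorem stmt3_general (R : Type*) [CommRing R] [HenselianLocalRing R]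
    (g : R[X]) (α : R)
    (hmod : ∃ m ∈ IsLocalRing.maximalIdeal R, g.eval α = ((derivative g).eval α) ^ 2 * m) :
    ∃ αstar : R, g.eval αstar = 0 ∧
      ∃ r : R, (derivative g).eval α * (αstar - α) = g.eval α * r := by
  obtain ⟨m, hm, hgm⟩ := hmod
  set c := (derivative g).eval α
  obtain ⟨q, hq⟩ := g.exists_eval_add_eq_add_mul_add_sq_mul α
  set f : R[X] := C m + X + X ^ 2 * q.comp (C c * X)
  have hf (t : R) : g.eval (α + c * t) = c ^ 2 * f.eval t := by
    simp only [hq, hgm, f, eval_add, eval_mul, eval_pow, eval_C, eval_X, eval_comp]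
    ring
  have hf0 : f.eval 0 = m := by simp [f]
  obtain ⟨t, ht, r, htr⟩ :=
    HenselianLocalRing.exists_isRoot_dvd_sub (p := f) (a := 0) (hf0 ▸ hm) (by simp [f])
  rw [sub_zero, hf0] at htr
  refine ⟨α + c * t, by rw [hf, ht.eq_zero, mul_zero], r, ?_⟩
  rw [hgm, htr]
  ring

/-- Hensel's lemma variant. If `R` is a Henselian local domain,
`g ∈ R[x]`, `α ∈ R` with `g'(α) ≠ 0` and `g(α) ∈ g'(α)² · m`, then there is `α* ∈ R`
with `g(α*) = 0` and `α* − α ∈ (g(α)/g'(α))·R`, i.e. `g'(α)·(α* − α) ∈ g(α)·R`. -/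
theorem stmt3 (R : Type*) [CommRing R] [IsDomain R] [HenselianLocalRing R] (hR : ¬ IsField R)
    (g : R[X]) (α : R)
    (hder : (derivative g).eval α ≠ 0)
    (hmod : ∃ m ∈ IsLocalRing.maximalIdeal R, g.eval α = ((derivative g).eval α) ^ 2 * m) :
    ∃ αstar : R, g.eval αstar = 0 ∧
      ∃ r : R, (derivative g).eval α * (αstar - α) = g.eval α * r :=
  stmt3_general R g α hmod
end

section
/- Let ∂ : ℚ_p → ℚ_p be a ℚ-linear derivation with ∂t = 1 for some fixed t ∈ ℚ_p transcendental over ℚ. Then the graph {(a, ∂a) : a ∈ ℚ_p} is dense in ℚ_p² for the p-adic topology. -/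
/-! The graph of `D` contains the image of the dense set `ℚ × ℚ` under the affine
homeomorphism `(x, y) ↦ (x + y t, (D t) y)` of `K × K`, since `D (x + y t) = y D t` for
rational `x, y`. -/

section DenseGraph

variable {K : Type*} [Field K] (D : K → K)

lemma apply_ratCast_add_ratCast_mul (hadd : ∀ a b : K, D (a + b) = D a + D b)
    (hmul : ∀ a b : K, D (a * b) = a * D b + b * D a) (hQ : ∀ q : ℚ, D (q : K) = 0)
    (t : K) (x y : ℚ) : D (x + y * t) = y * D t := by
  rw [hadd, hmul, hQ, hQ]
  ring

lemma dense_graph_of_denseRange_ratCast [TopologicalSpace K] [IsTopologicalRing K]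
    (hℚ : DenseRange ((↑) : ℚ → K)) (hadd : ∀ a b : K, D (a + b) = D a + D b)
    (hmul : ∀ a b : K, D (a * b) = a * D b + b * D a) (hQ : ∀ q : ℚ, D (q : K) = 0)
    {t : K} (hDt : D t ≠ 0) :
    Dense {x : K × K | ∃ a : K, x = (a, D a)} := by
  let Φ : K × K → K × K := fun z => (z.1 + z.2 * t, z.2 * D t)
  have hΦ_surj : Function.Surjective Φ := fun w =>
    ⟨(w.1 - w.2 / D t * t, w.2 / D t), by simp [Φ, hDt]⟩
  have hΦ_cont : Continuous Φ := by fun_prop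
  have hdense : DenseRange (Φ ∘ Prod.map ((↑) : ℚ → K) ((↑) : ℚ → K)) :=
    hΦ_surj.denseRange.comp (hℚ.prodMap hℚ) hΦ_cont
  refine hdense.mono ?_
  rintro _ ⟨⟨x, y⟩, rfl⟩
  exact ⟨x + y * t, by simp [Φ, apply_ratCast_add_ratCast_mul D hadd hmul hQ]⟩

end DenseGraph

theorem stmt9_general (p : ℕ) [Fact p.Prime] (D : ℚ_[p] → ℚ_[p])
    (hadd : ∀ a b : ℚ_[p], D (a + b) = D a + D b)
    (hmul : ∀ a b : ℚ_[p], D (a * b) = a * D b + b * D a)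
    (hQ : ∀ q : ℚ, D (q : ℚ_[p]) = 0)
    (t : ℚ_[p]) (hDt : D t = 1) :
    Dense {x : ℚ_[p] × ℚ_[p] | ∃ a : ℚ_[p], x = (a, D a)} :=
  dense_graph_of_denseRange_ratCast D (Padic.denseRange_ratCast p) hadd hmul hQ
    (hDt ▸ one_ne_zero)

/-- If `∂ : ℚ_p → ℚ_p` is a ℚ-linear derivation with `∂ t = 1` for some
`t` transcendental over `ℚ`, then the graph of `∂` is dense in `ℚ_p²`. -/
theorem stmt9 (p : ℕ) [Fact p.Prime] (D : ℚ_[p] → ℚ_[p])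
    (hadd : ∀ a b : ℚ_[p], D (a + b) = D a + D b)
    (hmul : ∀ a b : ℚ_[p], D (a * b) = a * D b + b * D a)
    (hQ : ∀ q : ℚ, D (q : ℚ_[p]) = 0)
    (t : ℚ_[p]) (ht : Transcendental ℚ t) (hDt : D t = 1) :
    Dense {x : ℚ_[p] × ℚ_[p] | ∃ a : ℚ_[p], x = (a, D a)} :=
  stmt9_general p D hadd hmul hQ t hDt
end

section
/- Let ∂ : ℚ_p → ℚ_p be a nonzero ℚ-linear derivation and E = {a ∈ ℤ_p : ∂a ∈ ℤ_p}. Then E is a subring of ℤ_p and the fraction field of E is ℚ_p. -/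
/-!
An element `x` and its derivative are both scaled into the unit ball by multiplying `x` with a
high power of `p`, and `∂` kills `p`; hence `x = (pⁿ x) / pⁿ` with `pⁿ x, pⁿ ∈ E`. That `E` is
closed under sums and products is the ultrametric inequality applied to the Leibniz rule.
-/

open Filter Topology IsUltrametricDist

section Ring

variable {R : Type*} [Ring R] {D : R → R}

theorem map_one_eq_zero_of_leibniz (hmul : ∀ a b : R, D (a * b) = a * D b + b * D a) :
    D 1 = 0 := by
  simpa using hmul 1 1

theorem map_pow_eq_zero_of_leibniz (hmul : ∀ a b : R, D (a * b) = a * D b + b * D a)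
    {c : R} (hc : D c = 0) (n : ℕ) : D (c ^ n) = 0 := by
  induction n with
  | zero => simpa using map_one_eq_zero_of_leibniz hmul
  | succ n ih => rw [pow_succ, hmul, ih, hc, mul_zero, mul_zero, add_zero]

end Ring

section NormedRing

variable {K : Type*} [NormedRing K] [NormOneClass K]

theorem eventually_norm_pow_mul_le_one {c : K} (hc : ‖c‖ < 1) (y : K) :
    ∀ᶠ n in atTop, ‖c ^ n * y‖ ≤ 1 := by
  have hlim : Tendsto (fun n : ℕ => ‖c‖ ^ n * ‖y‖) atTop (𝓝 0) := by
    simpa using (tendsto_pow_atTop_nhds_zero_of_lt_one (norm_nonneg c) hc).mul_const ‖y‖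
  filter_upwards [hlim.eventually_lt_const one_pos] with n hn
  calc ‖c ^ n * y‖ ≤ ‖c ^ n‖ * ‖y‖ := norm_mul_le _ _
    _ ≤ ‖c‖ ^ n * ‖y‖ := by gcongr; exact norm_pow_le c n
    _ ≤ 1 := hn.le

variable [IsUltrametricDist K] {D : K → K}

def derivIntegers (hadd : ∀ a b : K, D (a + b) = D a + D b)
    (hmul : ∀ a b : K, D (a * b) = a * D b + b * D a) : Subring K where
  carrier := {a | ‖a‖ ≤ 1 ∧ ‖D a‖ ≤ 1}
  zero_mem' := by simp [show D 0 = 0 from (AddMonoidHom.mk' D hadd).map_zero]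
  one_mem' := by simp [map_one_eq_zero_of_leibniz hmul]
  add_mem' := fun {a b} ⟨ha, hDa⟩ ⟨hb, hDb⟩ =>
    ⟨(norm_add_le_max a b).trans (max_le ha hb),
      hadd a b ▸ (norm_add_le_max _ _).trans (max_le hDa hDb)⟩
  mul_mem' := fun {a b} ⟨ha, hDa⟩ ⟨hb, hDb⟩ =>
    ⟨(norm_mul_le a b).trans (mul_le_one₀ ha (norm_nonneg b) hb),
      hmul a b ▸ (norm_add_le_max _ _).trans (max_le
        ((norm_mul_le _ _).trans (mul_le_one₀ ha (norm_nonneg _) hDb))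
        ((norm_mul_le _ _).trans (mul_le_one₀ hb (norm_nonneg _) hDa)))⟩
  neg_mem' := fun {a} ⟨ha, hDa⟩ => by
    simpa [show D (-a) = -D a from (AddMonoidHom.mk' D hadd).map_neg a] using And.intro ha hDa

theorem eventually_pow_mul_mem_derivIntegers (hadd : ∀ a b : K, D (a + b) = D a + D b)
    (hmul : ∀ a b : K, D (a * b) = a * D b + b * D a) {c : K} (hc : ‖c‖ < 1) (hDc : D c = 0)
    (x : K) : ∀ᶠ n in atTop, c ^ n * x ∈ derivIntegers hadd hmul := by
  have hD : ∀ n : ℕ, D (c ^ n * x) = c ^ n * D x := fun n => by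
    rw [hmul, map_pow_eq_zero_of_leibniz hmul hDc, mul_zero, add_zero]
  filter_upwards [eventually_norm_pow_mul_le_one hc x, eventually_norm_pow_mul_le_one hc (D x)]
    with n hx hDx
  exact ⟨hx, (hD n).symm ▸ hDx⟩

end NormedRing

theorem exists_eq_div_of_mem_derivIntegers {K : Type*} [NormedField K] [IsUltrametricDist K]
    {D : K → K} (hadd : ∀ a b : K, D (a + b) = D a + D b)
    (hmul : ∀ a b : K, D (a * b) = a * D b + b * D a) {c : K} (hc₀ : c ≠ 0) (hc : ‖c‖ < 1)
    (hDc : D c = 0) (x : K) :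
    ∃ a ∈ derivIntegers hadd hmul, ∃ b ∈ derivIntegers hadd hmul, b ≠ 0 ∧ x = a / b := by
  obtain ⟨n, hn⟩ := (eventually_pow_mul_mem_derivIntegers hadd hmul hc hDc x).exists
  have hc_mem : c ∈ derivIntegers hadd hmul := ⟨hc.le, by simp [hDc]⟩
  refine ⟨_, hn, _, pow_mem hc_mem n, pow_ne_zero n hc₀, ?_⟩
  field_simp

theorem stmt10_general (p : ℕ) [Fact p.Prime] (D : ℚ_[p] → ℚ_[p])
    (hadd : ∀ a b : ℚ_[p], D (a + b) = D a + D b)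
    (hmul : ∀ a b : ℚ_[p], D (a * b) = a * D b + b * D a)
    (hQ : ∀ q : ℚ, D (q : ℚ_[p]) = 0) :
    (∃ S : Subring ℚ_[p], (S : Set ℚ_[p]) = {a : ℚ_[p] | ‖a‖ ≤ 1 ∧ ‖D a‖ ≤ 1}) ∧
    ∀ x : ℚ_[p], ∃ a b : ℚ_[p],
      (‖a‖ ≤ 1 ∧ ‖D a‖ ≤ 1) ∧ (‖b‖ ≤ 1 ∧ ‖D b‖ ≤ 1) ∧ b ≠ 0 ∧ x = a / b := by
  refine ⟨⟨derivIntegers hadd hmul, rfl⟩, fun x => ?_⟩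
  have hp₀ : (p : ℚ_[p]) ≠ 0 := by exact_mod_cast (Fact.out : p.Prime).ne_zero
  have hDp : D p = 0 := by simpa using hQ p
  obtain ⟨a, ha, b, hb, hb₀, hx⟩ :=
    exists_eq_div_of_mem_derivIntegers hadd hmul hp₀ Padic.norm_p_lt_one hDp x
  exact ⟨a, b, ha, hb, hb₀, hx⟩

/-- For a nonzero ℚ-linear derivation `∂` on `ℚ_p`, the set
`E = {a ∈ ℤ_p : ∂a ∈ ℤ_p}` is a subring of `ℤ_p` and its fraction field is `ℚ_p`. -/
theorem stmt10 (p : ℕ) [Fact p.Prime] (D : ℚ_[p] → ℚ_[p])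
    (hadd : ∀ a b : ℚ_[p], D (a + b) = D a + D b)
    (hmul : ∀ a b : ℚ_[p], D (a * b) = a * D b + b * D a)
    (hQ : ∀ q : ℚ, D (q : ℚ_[p]) = 0)
    (hne : D ≠ 0) :
    (∃ S : Subring ℚ_[p], (S : Set ℚ_[p]) = {a : ℚ_[p] | ‖a‖ ≤ 1 ∧ ‖D a‖ ≤ 1}) ∧
    ∀ x : ℚ_[p], ∃ a b : ℚ_[p],
      (‖a‖ ≤ 1 ∧ ‖D a‖ ≤ 1) ∧ (‖b‖ ≤ 1 ∧ ‖D b‖ ≤ 1) ∧ b ≠ 0 ∧ x = a / b :=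
  stmt10_general p D hadd hmul hQ
end

section
/- Let ∂ : ℚ_p → ℚ_p be a nonzero ℚ-linear derivation and E = {a ∈ ℤ_p : ∂a ∈ ℤ_p}. Then E is a Henselian local ring: for any g ∈ E[x] and a ∈ E with g(a) ∈ E ∩ pℤ_p and g'(a) ∉ E ∩ pℤ_p, there exists a* ∈ E with g(a*) = 0 and a* − a ∈ E ∩ pℤ_p. -/
/-!
Lift `g` to `ℤ_p[x]` and apply Hensel's lemma there to get a root `a*` close to `a` with
`|g'(a*)| = 1`. Applying `∂` to `g(a*) = 0` gives `g^∂(a*) + g'(a*) ∂a* = 0`, where `g^∂` is `g`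
with `∂` applied to its coefficients; as `g^∂` has `p`-adically integral coefficients and `g'(a*)`
is a unit, `∂a*` is integral.
-/

open Polynomial

def derivationOfLeibniz {A : Type*} [CommRing A] (D : A → A)
    (hadd : ∀ a b, D (a + b) = D a + D b) (hmul : ∀ a b, D (a * b) = a * D b + b * D a) :
    Derivation ℤ A A :=
  Derivation.mk' (AddMonoidHom.mk' D hadd).toIntLinearMap hmul

section Ultrametric

variable {K : Type*} [NormedField K] [IsUltrametricDist K]

theorem norm_eval_le_one {g : K[X]} (hg : ∀ i, ‖g.coeff i‖ ≤ 1) {x : K} (hx : ‖x‖ ≤ 1) :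
    ‖g.eval x‖ ≤ 1 := by
  rw [eval_eq_sum, Polynomial.sum_def]
  refine IsUltrametricDist.norm_sum_le_of_forall_le_of_nonneg zero_le_one fun i _ => ?_
  rw [norm_mul, norm_pow]
  exact mul_le_one₀ (hg i) (by positivity) (pow_le_one₀ (norm_nonneg _) hx)

theorem norm_coeff_derivative_le_one {g : K[X]} (hg : ∀ i, ‖g.coeff i‖ ≤ 1) (n : ℕ) :
    ‖(derivative g).coeff n‖ ≤ 1 := by
  rw [coeff_derivative, norm_mul]
  exact mul_le_one₀ (hg _) (norm_nonneg _)
    (mod_cast IsUltrametricDist.norm_natCast_le_one K (n + 1))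

theorem Derivation.norm_le_one_of_isRoot {R : Type*} [CommRing R] [Algebra R K]
    (d : Derivation R K K) {g : K[X]} (hg : ∀ i, ‖d (g.coeff i)‖ ≤ 1) {x : K} (hx : ‖x‖ ≤ 1)
    (hroot : g.eval x = 0) (hg' : ‖(derivative g).eval x‖ = 1) : ‖d x‖ ≤ 1 := by
  have hcoeffs : ‖PolynomialModule.eval x (d.mapCoeffs g)‖ ≤ 1 := by
    rw [PolynomialModule.eval_apply, Finsupp.sum]
    refine IsUltrametricDist.norm_sum_le_of_forall_le_of_nonneg zero_le_one fun i _ => ?_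
    rw [norm_smul, norm_pow]
    exact mul_le_one₀ (pow_le_one₀ (norm_nonneg _) hx) (norm_nonneg _) (hg i)
  have h := d.apply_eval_eq x g
  rw [hroot, map_zero, smul_eq_mul, eq_comm, ← eq_neg_iff_add_eq_zero] at h
  calc ‖d x‖ = ‖(derivative g).eval x * d x‖ := by rw [norm_mul, hg', one_mul]
    _ ≤ 1 := by rwa [h, norm_neg] at hcoeffs

end Ultrametric

theorem Padic.hensels_lemma {p : ℕ} [Fact p.Prime] {g : ℚ_[p][X]} (hg : ∀ i, ‖g.coeff i‖ ≤ 1)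
    {a : ℚ_[p]} (ha : ‖a‖ ≤ 1) (hnorm : ‖g.eval a‖ < ‖(derivative g).eval a‖ ^ 2) :
    ∃ z : ℚ_[p], ‖z‖ ≤ 1 ∧ g.eval z = 0 ∧ ‖z - a‖ < ‖(derivative g).eval a‖ ∧
      ‖(derivative g).eval z‖ = ‖(derivative g).eval a‖ := by
  obtain ⟨F, rfl⟩ : ∃ F : ℤ_[p][X], F.map PadicInt.Coe.ringHom = g :=
    mem_lifts _ |>.1 <| (lifts_iff_coeff_lifts g).2 fun n => ⟨(⟨_, hg n⟩ : ℤ_[p]), rfl⟩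
  obtain ⟨a, rfl⟩ : ∃ b : ℤ_[p], (b : ℚ_[p]) = a := ⟨(⟨a, ha⟩ : ℤ_[p]), rfl⟩
  have hcoe (G : ℤ_[p][X]) (z : ℤ_[p]) :
      (G.map PadicInt.Coe.ringHom).eval (z : ℚ_[p]) = G.eval z := by
    rw [eval_map]
    exact eval₂_at_apply PadicInt.Coe.ringHom z
  simp only [derivative_map, hcoe, PadicInt.padic_norm_e_of_padicInt] at hnorm ⊢
  obtain ⟨z, hz, hza, hz', -⟩ := _root_.hensels_lemma hnorm
  simp only [coe_aeval_eq_eval] at hz hza hz'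
  refine ⟨z, z.norm_le_one, by rw [hcoe, hz, PadicInt.coe_zero], ?_, ?_⟩
  · rwa [← PadicInt.coe_sub, PadicInt.padic_norm_e_of_padicInt]
  · rwa [hcoe, PadicInt.padic_norm_e_of_padicInt]

theorem stmt12_general (p : ℕ) [Fact p.Prime] (D : ℚ_[p] → ℚ_[p])
    (hadd : ∀ a b : ℚ_[p], D (a + b) = D a + D b)
    (hmul : ∀ a b : ℚ_[p], D (a * b) = a * D b + b * D a)
    (g : ℚ_[p][X]) (hg : ∀ i : ℕ, ‖g.coeff i‖ ≤ 1 ∧ ‖D (g.coeff i)‖ ≤ 1)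
    (a : ℚ_[p]) (ha : ‖a‖ ≤ 1 ∧ ‖D a‖ ≤ 1)
    (hga : ‖g.eval a‖ < 1)
    (hg'a : ¬ ‖(derivative g).eval a‖ < 1) :
    ∃ astar : ℚ_[p], (‖astar‖ ≤ 1 ∧ ‖D astar‖ ≤ 1) ∧ g.eval astar = 0 ∧
      (‖astar - a‖ ≤ 1 ∧ ‖D (astar - a)‖ ≤ 1) ∧ ‖astar - a‖ < 1 := by
  let d := derivationOfLeibniz D hadd hmul
  have hunit : ‖(derivative g).eval a‖ = 1 :=
    le_antisymm (norm_eval_le_one (norm_coeff_derivative_le_one fun i => (hg i).1) ha.1)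
      (not_lt.1 hg'a)
  obtain ⟨z, hz, hgz, hza, hg'z⟩ :=
    Padic.hensels_lemma (fun i => (hg i).1) ha.1 (by rwa [hunit, one_pow])
  rw [hunit] at hza hg'z
  have hDz : ‖D z‖ ≤ 1 := d.norm_le_one_of_isRoot (fun i => (hg i).2) hz hgz hg'z
  have hDza : ‖d (z - a)‖ ≤ 1 := by
    rw [map_sub, sub_eq_add_neg]
    refine (IsUltrametricDist.norm_add_le_max _ _).trans (max_le hDz ?_)
    rw [norm_neg]
    exact ha.2
  exact ⟨z, ⟨hz, hDz⟩, hgz, ⟨hza.le, hDza⟩, hza⟩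

/-- `E = {a ∈ ℤ_p : ∂a ∈ ℤ_p}` is Henselian: for a polynomial `g` with
coefficients in `E` and `a ∈ E` with `g(a) ∈ E ∩ pℤ_p` and `g'(a) ∉ E ∩ pℤ_p`, there is
`a* ∈ E` with `g(a*) = 0` and `a* − a ∈ E ∩ pℤ_p`. -/
theorem stmt12 (p : ℕ) [Fact p.Prime] (D : ℚ_[p] → ℚ_[p])
    (hadd : ∀ a b : ℚ_[p], D (a + b) = D a + D b)
    (hmul : ∀ a b : ℚ_[p], D (a * b) = a * D b + b * D a)
    (hQ : ∀ q : ℚ, D (q : ℚ_[p]) = 0)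
    (hne : D ≠ 0)
    (g : ℚ_[p][X]) (hg : ∀ i : ℕ, ‖g.coeff i‖ ≤ 1 ∧ ‖D (g.coeff i)‖ ≤ 1)
    (a : ℚ_[p]) (ha : ‖a‖ ≤ 1 ∧ ‖D a‖ ≤ 1)
    (hga : ‖g.eval a‖ < 1)
    (hg'a : ¬ ‖(derivative g).eval a‖ < 1) :
    ∃ astar : ℚ_[p], (‖astar‖ ≤ 1 ∧ ‖D astar‖ ≤ 1) ∧ g.eval astar = 0 ∧
      (‖astar - a‖ ≤ 1 ∧ ‖D (astar - a)‖ ≤ 1) ∧ ‖astar - a‖ < 1 :=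
  stmt12_general p D hadd hmul g hg a ha hga hg'a
end

section
/- Let ∂ be a nonzero ℚ-linear derivation on ℚ_p and E = {a ∈ ℤ_p : ∂a ∈ ℤ_p}. Suppose a, a', a'' ∈ ℚ_p with v(a) ≤ min{v(a'), v(a'')} and v(∂(a'/a)) ≤ v(∂(a''/a)). Then a'' ∈ aE + a'E. -/
/-!
Put `x = a'/a` and `y = a''/a`; both are integral. Since `‖∂y‖ ≤ ‖∂x‖`, density of `ℚ` in `ℚ_p`
gives a rational `q` with `‖q‖ ≤ 1` and `‖∂y - q ∂x‖ ≤ 1`. As `∂` kills `ℚ`, `∂(y - q x) = ∂y - q ∂x`,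
so `e = y - q x` and `e' = q` lie in `E`, and `a e + a' e' = a y = a''`.
-/

theorem IsUltrametricDist.norm_sub_le_max {S : Type*} [SeminormedAddGroup S] [IsUltrametricDist S]
    (x y : S) : ‖x - y‖ ≤ max ‖x‖ ‖y‖ := by
  simpa only [sub_eq_add_neg, norm_neg] using norm_add_le_max x (-y)

section NormedField

variable {K : Type*} [NormedField K]

theorem norm_div_le_one_of_norm_le {a b : K} (h : ‖b‖ ≤ ‖a‖) : ‖b / a‖ ≤ 1 := by
  rw [norm_div]
  exact div_le_one_of_le₀ h (norm_nonneg a)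

/-- Unlike `mul_div_cancel₀`, this needs no `a ≠ 0`: for `a = 0` the hypothesis forces `b = 0`. -/
theorem mul_div_cancel_of_norm_le {a b : K} (h : ‖b‖ ≤ ‖a‖) : a * (b / a) = b := by
  rcases eq_or_ne a 0 with rfl | ha
  · simpa using (norm_le_zero_iff.mp (by simpa using h)).symm
  · exact mul_div_cancel₀ b ha

end NormedField

theorem map_sub_ratCast_mul_of_leibniz {K : Type*} [DivisionRing K] {D : K → K}
    (hadd : ∀ x y : K, D (x + y) = D x + D y)
    (hmul : ∀ x y : K, D (x * y) = x * D y + y * D x)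
    (hQ : ∀ q : ℚ, D (q : K) = 0) (q : ℚ) (x y : K) :
    D (y - q * x) = D y - q * D x := by
  have hsub : D (y - q * x) = D y - D (q * x) :=
    eq_sub_of_add_eq (by rw [← hadd, sub_add_cancel])
  rw [hsub, hmul, hQ, mul_zero, add_zero]

namespace Padic

variable {p : ℕ} [Fact p.Prime]

theorem exists_rat_norm_le_one_norm_sub_mul_lt {u w : ℚ_[p]} (huw : ‖u‖ ≤ ‖w‖) {ε : ℝ}
    (hε : 0 < ε) : ∃ q : ℚ, ‖(q : ℚ_[p])‖ ≤ 1 ∧ ‖u - q * w‖ < ε := by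
  rcases eq_or_ne w 0 with rfl | hw
  · refine ⟨0, by simp, ?_⟩
    simpa [norm_le_zero_iff.mp (by simpa using huw)] using hε
  have hw' : 0 < ‖w‖ := norm_pos_iff.mpr hw
  obtain ⟨q, hq⟩ := rat_dense p (u / w) (lt_min one_pos (div_pos hε hw'))
  refine ⟨q, ?_, ?_⟩
  · calc ‖(q : ℚ_[p])‖ = ‖u / w - (u / w - q)‖ := by rw [sub_sub_cancel]
      _ ≤ max ‖u / w‖ ‖u / w - q‖ := IsUltrametricDist.norm_sub_le_max _ _
      _ ≤ 1 := max_le (norm_div_le_one_of_norm_le huw) (hq.le.trans (min_le_left _ _))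
  · calc ‖u - q * w‖ = ‖w‖ * ‖u / w - q‖ := by
          rw [← norm_mul, mul_sub, mul_div_cancel₀ u hw, mul_comm]
      _ < ‖w‖ * (ε / ‖w‖) := mul_lt_mul_of_pos_left (hq.trans_le (min_le_right _ _)) hw'
      _ = ε := mul_div_cancel₀ ε hw'.ne'

end Padic

theorem stmt13_general (p : ℕ) [Fact p.Prime] (D : ℚ_[p] → ℚ_[p])
    (hadd : ∀ x y : ℚ_[p], D (x + y) = D x + D y)
    (hmul : ∀ x y : ℚ_[p], D (x * y) = x * D y + y * D x)
    (hQ : ∀ q : ℚ, D (q : ℚ_[p]) = 0)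
    (a a' a'' : ℚ_[p])
    (h1 : ‖a'‖ ≤ ‖a‖) (h2 : ‖a''‖ ≤ ‖a‖)
    (h3 : ‖D (a'' / a)‖ ≤ ‖D (a' / a)‖) :
    ∃ e e' : ℚ_[p], (‖e‖ ≤ 1 ∧ ‖D e‖ ≤ 1) ∧ (‖e'‖ ≤ 1 ∧ ‖D e'‖ ≤ 1) ∧
      a'' = a * e + a' * e' := by
  obtain ⟨q, hq, hDq⟩ := Padic.exists_rat_norm_le_one_norm_sub_mul_lt h3 one_pos
  refine ⟨a'' / a - q * (a' / a), q, ⟨?_, ?_⟩, ⟨hq, by simp [hQ]⟩, ?_⟩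
  · calc ‖a'' / a - q * (a' / a)‖ ≤ max ‖a'' / a‖ ‖q * (a' / a)‖ :=
          IsUltrametricDist.norm_sub_le_max _ _
      _ ≤ 1 := by
        rw [norm_mul]
        exact max_le (norm_div_le_one_of_norm_le h2)
          (mul_le_one₀ hq (norm_nonneg _) (norm_div_le_one_of_norm_le h1))
  · rw [map_sub_ratCast_mul_of_leibniz hadd hmul hQ]
    exact hDq.le
  · rw [mul_sub, mul_div_cancel_of_norm_le h2, mul_left_comm, mul_div_cancel_of_norm_le h1]
    ring

/-- Let `∂` be a nonzero ℚ-linear derivation on `ℚ_p` and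
`E = {x ∈ ℤ_p : ∂x ∈ ℤ_p}`. If `v(a) ≤ min{v(a'), v(a'')}` and
`v(∂(a'/a)) ≤ v(∂(a''/a))` (stated via norms), then `a'' ∈ aE + a'E`. -/
theorem stmt13 (p : ℕ) [Fact p.Prime] (D : ℚ_[p] → ℚ_[p])
    (hadd : ∀ x y : ℚ_[p], D (x + y) = D x + D y)
    (hmul : ∀ x y : ℚ_[p], D (x * y) = x * D y + y * D x)
    (hQ : ∀ q : ℚ, D (q : ℚ_[p]) = 0)
    (hne : D ≠ 0)
    (a a' a'' : ℚ_[p])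
    (h1 : ‖a'‖ ≤ ‖a‖) (h2 : ‖a''‖ ≤ ‖a‖)
    (h3 : ‖D (a'' / a)‖ ≤ ‖D (a' / a)‖) :
    ∃ e e' : ℚ_[p], (‖e‖ ≤ 1 ∧ ‖D e‖ ≤ 1) ∧ (‖e'‖ ≤ 1 ∧ ‖D e'‖ ≤ 1) ∧
      a'' = a * e + a' * e' :=
  stmt13_general p D hadd hmul hQ a a' a'' h1 h2 h3
end

section
/- Let ∂ be a nonzero ℚ-linear derivation on ℚ_p and E = {a ∈ ℤ_p : ∂a ∈ ℤ_p}. Then every nonzero ideal I of E is generated by two elements: choosing a ∈ I minimizing v(a) and a' ∈ I minimizing v(∂(a'/a)), one has I = aE + a'E. -/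
/-!
Take `a ∈ I` of maximal norm (norms of `p`-adic numbers are discrete), so `b / a` is integral
for every `b ∈ I`. By the quotient rule `‖∂(b / a)‖ ≤ ‖a‖⁻¹`, so `a' ∈ I` maximising
`‖∂(· / a)‖` exists as well. Given `b ∈ I`, approximate `∂(b / a) / ∂(a' / a)`, which has
norm at most `1`, by a rational `q` to within `‖∂(a' / a)‖⁻¹`. Since `∂` kills `ℚ`, the element
`e = b / a - q a' / a` satisfies `‖e‖ ≤ 1` and `‖∂e‖ ≤ 1`, i.e. `e ∈ E`, and `b = a e + a' q`.
-/

namespace IsUltrametricDist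

lemma norm_sub_le_max_s14 {G : Type*} [SeminormedAddGroup G] [IsUltrametricDist G] (x y : G) :
    ‖x - y‖ ≤ max ‖x‖ ‖y‖ := by
  simpa only [sub_eq_add_neg, norm_neg] using norm_add_le_max x (-y)

end IsUltrametricDist

open IsUltrametricDist

namespace Derivation

def ratOfLeibniz {K : Type*} [Field K] [CharZero K] (D : K → K)
    (hadd : ∀ x y, D (x + y) = D x + D y) (hmul : ∀ x y, D (x * y) = x * D y + y * D x)
    (hQ : ∀ q : ℚ, D q = 0) : Derivation ℚ K K :=
  Derivation.mk'
    { toFun := D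
      map_add' := hadd
      map_smul' := fun q x => by
        simp only [Rat.smul_def, hmul, hQ, mul_zero, add_zero, RingHom.id_apply] }
    hmul

lemma map_ratCast {K : Type*} [Field K] [CharZero K] (d : Derivation ℚ K K) (q : ℚ) :
    d q = 0 := by
  simpa using d.map_algebraMap q

variable {R K : Type*} [CommRing R] [NormedField K] [IsUltrametricDist K] [Algebra R K]

theorem norm_div_le_inv_norm (d : Derivation R K K) {x y : K} (hxy : ‖x‖ ≤ ‖y‖)
    (hx : ‖d x‖ ≤ 1) (hy : ‖d y‖ ≤ 1) : ‖d (x / y)‖ ≤ ‖y‖⁻¹ := by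
  have hnum : ‖y * d x - x * d y‖ ≤ ‖y‖ := by
    refine (norm_sub_le_max_s14 _ _).trans (max_le ?_ ?_) <;> rw [norm_mul]
    · exact mul_le_of_le_one_right (norm_nonneg _) hx
    · exact (mul_le_mul hxy hy (norm_nonneg _) (norm_nonneg _)).trans_eq (mul_one _)
  calc ‖d (x / y)‖ = ‖y‖⁻¹ ^ 2 * ‖y * d x - x * d y‖ := by
        rw [d.leibniz_div, smul_eq_mul, norm_mul, norm_pow, norm_inv, smul_eq_mul, smul_eq_mul]
    _ ≤ ‖y‖⁻¹ ^ 2 * ‖y‖ := by gcongr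
    _ = ‖y‖⁻¹ := by
        rcases eq_or_ne ‖y‖ 0 with h | h
        · simp [h]
        · field_simp

end Derivation

namespace Padic

variable {p : ℕ} [Fact p.Prime]

theorem exists_forall_norm_le_of_forall_norm_le {ι : Type*} {s : Set ι} (hs : s.Nonempty)
    (f : ι → ℚ_[p]) (C : ℝ) (hC : ∀ i ∈ s, ‖f i‖ ≤ C) :
    ∃ i ∈ s, ∀ j ∈ s, ‖f j‖ ≤ ‖f i‖ := by
  have hp : (1 : ℝ) < p := by exact_mod_cast (Fact.out : p.Prime).one_lt
  by_cases hzero : ∀ i ∈ s, f i = 0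
  · obtain ⟨i, hi⟩ := hs
    exact ⟨i, hi, fun j hj => by simp [hzero j hj]⟩
  obtain ⟨i₀, hi₀, hfi₀⟩ : ∃ i ∈ s, f i ≠ 0 := by simpa using hzero
  obtain ⟨n, hn⟩ := pow_unbounded_of_one_lt C hp
  have hbdd : ∃ b : ℤ, ∀ k, (∃ i ∈ s, f i ≠ 0 ∧ (f i).valuation = k) → b ≤ k := by
    refine ⟨-n, ?_⟩
    rintro _ ⟨i, hi, hfi, rfl⟩
    have h : (p : ℝ) ^ (-(f i).valuation) < (p : ℝ) ^ (n : ℤ) := by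
      rw [← norm_eq_zpow_neg_valuation hfi, zpow_natCast]
      exact (hC i hi).trans_lt hn
    linarith [(zpow_lt_zpow_iff_right₀ hp).mp h]
  obtain ⟨_, ⟨i, hi, hfi, rfl⟩, hmin⟩ := Int.exists_least_of_bdd hbdd ⟨_, i₀, hi₀, hfi₀, rfl⟩
  refine ⟨i, hi, fun j hj => ?_⟩
  rcases eq_or_ne (f j) 0 with hfj | hfj
  · simp [hfj]
  rw [norm_eq_zpow_neg_valuation hfj, norm_eq_zpow_neg_valuation hfi]
  exact zpow_le_zpow_right₀ hp.le (neg_le_neg (hmin _ ⟨j, hj, hfj, rfl⟩))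

theorem exists_rat_norm_le_one_and_norm_sub_mul_le_one {c c' : ℚ_[p]} (hc : ‖c‖ ≤ ‖c'‖) :
    ∃ q : ℚ, ‖(q : ℚ_[p])‖ ≤ 1 ∧ ‖c - q * c'‖ ≤ 1 := by
  rcases eq_or_ne c' 0 with rfl | hc'
  · exact ⟨0, by simp, by simpa using hc.trans_eq norm_zero |>.trans zero_le_one⟩
  have hc'pos : 0 < ‖c'‖ := norm_pos_iff.mpr hc'
  obtain ⟨q, hq⟩ := rat_dense p (c / c') (lt_min one_pos (inv_pos.mpr hc'pos))
  have hquot : ‖c / c'‖ ≤ 1 := by rwa [norm_div, div_le_one hc'pos]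
  refine ⟨q, ?_, ?_⟩
  · calc ‖(q : ℚ_[p])‖ = ‖c / c' - (c / c' - q)‖ := by rw [sub_sub_cancel]
      _ ≤ 1 := (norm_sub_le_max_s14 _ _).trans (max_le hquot (hq.le.trans (min_le_left _ _)))
  · calc ‖c - q * c'‖ = ‖c'‖ * ‖c / c' - q‖ := by rw [← norm_mul]; congr 1; field_simp
      _ ≤ ‖c'‖ * ‖c'‖⁻¹ := by gcongr; exact hq.le.trans (min_le_right _ _)
      _ = 1 := mul_inv_cancel₀ hc'pos.ne'

end Padic

section DerivationIntegers

variable {p : ℕ} [Fact p.Prime] {d : Derivation ℚ ℚ_[p] ℚ_[p]} {S : Subring ℚ_[p]}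

theorem ratCast_mem_of_norm_le_one (hS : ∀ x, x ∈ S ↔ ‖x‖ ≤ 1 ∧ ‖d x‖ ≤ 1) {q : ℚ}
    (hq : ‖(q : ℚ_[p])‖ ≤ 1) : (q : ℚ_[p]) ∈ S :=
  (hS _).mpr ⟨hq, by simp [d.map_ratCast]⟩

theorem mem_span_pair_of_norm_derivation_div_le (hS : ∀ x, x ∈ S ↔ ‖x‖ ≤ 1 ∧ ‖d x‖ ≤ 1)
    {a a' b : S} (hb : ‖(b : ℚ_[p])‖ ≤ ‖(a : ℚ_[p])‖) (ha' : ‖(a' : ℚ_[p])‖ ≤ ‖(a : ℚ_[p])‖)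
    (hd : ‖d (b / a)‖ ≤ ‖d (a' / a)‖) : b ∈ Ideal.span {a, a'} := by
  rcases eq_or_ne (a : ℚ_[p]) 0 with ha | ha
  · have : b = 0 := Subtype.ext (norm_le_zero_iff.mp (by simpa [ha] using hb))
    exact this ▸ Ideal.zero_mem _
  have hapos : 0 < ‖(a : ℚ_[p])‖ := norm_pos_iff.mpr ha
  obtain ⟨q, hq, hdiff⟩ := Padic.exists_rat_norm_le_one_and_norm_sub_mul_le_one hd
  set e : ℚ_[p] := b / a - q * (a' / a)
  have he : e ∈ S := by
    refine (hS e).mpr ⟨(norm_sub_le_max_s14 _ _).trans (max_le ?_ ?_), ?_⟩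
    · rwa [norm_div, div_le_one hapos]
    · rw [norm_mul, norm_div]
      exact mul_le_one₀ hq (by positivity) ((div_le_one hapos).mpr ha')
    · simpa [e, d.leibniz, d.map_ratCast] using hdiff
  refine Ideal.mem_span_pair.mpr ⟨⟨e, he⟩, ⟨q, ratCast_mem_of_norm_le_one hS hq⟩, Subtype.ext ?_⟩
  simp only [Subring.coe_add, Subring.coe_mul, e]
  field_simp
  ring

theorem eq_span_pair_of_forall_norm_le (hS : ∀ x, x ∈ S ↔ ‖x‖ ≤ 1 ∧ ‖d x‖ ≤ 1) {I : Ideal S}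
    {a a' : S} (ha : a ∈ I) (hmax : ∀ b ∈ I, ‖(b : ℚ_[p])‖ ≤ ‖(a : ℚ_[p])‖) (ha' : a' ∈ I)
    (hmax' : ∀ b ∈ I, ‖d (b / a)‖ ≤ ‖d (a' / a)‖) : I = Ideal.span {a, a'} := by
  refine le_antisymm (fun b hb => ?_) (Ideal.span_le.mpr (Set.pair_subset ha ha'))
  exact mem_span_pair_of_norm_derivation_div_le hS (hmax b hb) (hmax a' ha') (hmax' b hb)

end DerivationIntegers

theorem stmt14_general (p : ℕ) [Fact p.Prime] (D : ℚ_[p] → ℚ_[p])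
    (hadd : ∀ x y : ℚ_[p], D (x + y) = D x + D y)
    (hmul : ∀ x y : ℚ_[p], D (x * y) = x * D y + y * D x)
    (hQ : ∀ q : ℚ, D (q : ℚ_[p]) = 0)
    (S : Subring ℚ_[p]) (hS : (S : Set ℚ_[p]) = {x : ℚ_[p] | ‖x‖ ≤ 1 ∧ ‖D x‖ ≤ 1})
    (I : Ideal S) :
    (∃ x y : S, I = Ideal.span {x, y}) ∧
    ∀ a : S, a ∈ I → (∀ b : S, b ∈ I → ‖(b : ℚ_[p])‖ ≤ ‖(a : ℚ_[p])‖) →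
    ∀ a' : S, a' ∈ I →
      (∀ b : S, b ∈ I → ‖D ((b : ℚ_[p]) / (a : ℚ_[p]))‖ ≤ ‖D ((a' : ℚ_[p]) / (a : ℚ_[p]))‖) →
      I = Ideal.span {a, a'} := by
  set d := Derivation.ratOfLeibniz D hadd hmul hQ
  have hS' : ∀ x, x ∈ S ↔ ‖x‖ ≤ 1 ∧ ‖d x‖ ≤ 1 := fun x => Set.ext_iff.mp hS x
  have hnorm_le (b : S) : ‖(b : ℚ_[p])‖ ≤ 1 := ((hS' b).mp b.2).1
  have hdnorm_le (b : S) : ‖d b‖ ≤ 1 := ((hS' b).mp b.2).2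
  obtain ⟨a, ha, hmax⟩ := Padic.exists_forall_norm_le_of_forall_norm_le ⟨0, I.zero_mem⟩
    (fun b : S => (b : ℚ_[p])) 1 fun b _ => hnorm_le b
  obtain ⟨a', ha', hmax'⟩ := Padic.exists_forall_norm_le_of_forall_norm_le ⟨0, I.zero_mem⟩
    (fun b : S => d (b / a)) ‖(a : ℚ_[p])‖⁻¹
    fun b hb => d.norm_div_le_inv_norm (hmax b hb) (hdnorm_le b) (hdnorm_le a)
  exact ⟨⟨a, a', eq_span_pair_of_forall_norm_le hS' ha hmax ha' hmax'⟩,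
    fun a ha hmax a' ha' hmax' => eq_span_pair_of_forall_norm_le hS' ha hmax ha' hmax'⟩

/-- Let `E = {x ∈ ℤ_p : ∂x ∈ ℤ_p}` (realized as a subring `S` of `ℚ_p`).
Every nonzero ideal `I` of `E` is generated by two elements; indeed, if `a ∈ I` minimizes
`v` (equivalently, maximizes the norm) on `I` and `a' ∈ I` minimizes `v(∂(·/a))`
(maximizes `‖∂(·/a)‖`) on `I`, then `I = aE + a'E`. -/
theorem stmt14 (p : ℕ) [Fact p.Prime] (D : ℚ_[p] → ℚ_[p])
    (hadd : ∀ x y : ℚ_[p], D (x + y) = D x + D y)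
    (hmul : ∀ x y : ℚ_[p], D (x * y) = x * D y + y * D x)
    (hQ : ∀ q : ℚ, D (q : ℚ_[p]) = 0)
    (hne : D ≠ 0)
    (S : Subring ℚ_[p]) (hS : (S : Set ℚ_[p]) = {x : ℚ_[p] | ‖x‖ ≤ 1 ∧ ‖D x‖ ≤ 1})
    (I : Ideal S) (hI : I ≠ ⊥) :
    (∃ x y : S, I = Ideal.span {x, y}) ∧
    ∀ a : S, a ∈ I → (∀ b : S, b ∈ I → ‖(b : ℚ_[p])‖ ≤ ‖(a : ℚ_[p])‖) →
    ∀ a' : S, a' ∈ I →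
      (∀ b : S, b ∈ I → ‖D ((b : ℚ_[p]) / (a : ℚ_[p]))‖ ≤ ‖D ((a' : ℚ_[p]) / (a : ℚ_[p]))‖) →
      I = Ideal.span {a, a'} :=
  stmt14_general p D hadd hmul hQ S hS I
end

section
/- Let R be an integral domain that is not a field, and suppose there exists n such that every ideal of R is generated by at most n elements. Then R is Noetherian of Krull dimension 1. -/
/-!
Bounded generation makes `R` Noetherian, so it remains to show that a nonzero prime `p` is
maximal. Let `m ⊇ p` be maximal, `0 ≠ x ∈ p`, and let `ℓ K` be the length of `R ⧸ m ^ K`.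
Each `m ^ j ⧸ m ^ (j + 1)` is spanned by `n` elements over the field `R ⧸ m`, so `ℓ K ≤ n * K`.
If the ideals `(x) + m ^ j` decreased strictly, the exact sequence
`0 → R ⧸ (m ^ K : x) → R ⧸ m ^ K → R ⧸ ((x) + m ^ K) → 0` and Artin–Rees, which in a domain
gives `(m ^ K : x) ⊆ m ^ (K - c)`, would yield `ℓ K ≥ K + ℓ (K - c)`: quadratic growth.
Hence `m ^ k ⊆ p + m ^ (k + 1)` for some `k`, and Krull's intersection theorem in the domain
`R ⧸ p` forces `m ⊆ p`.
-/

theorem ENat.not_forall_le_mul_of_forall_add_le {L : ℕ → ℕ∞} {c : ℕ} (hc : 0 < c)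
    (hL : ∀ K, K + L (K - c) ≤ L K) (n : ℕ) : ¬ ∀ K, L K ≤ n * K := by
  intro hup
  have hgrowth : ∀ t : ℕ, ((t * (t + 1) * c : ℕ) : ℕ∞) ≤ 2 * L (t * c) := by
    intro t
    induction t with
    | zero => simp
    | succ t ih =>
      have h := hL ((t + 1) * c)
      rw [show (t + 1) * c - c = t * c by rw [add_mul, one_mul, Nat.add_sub_cancel]] at h
      calc (((t + 1) * (t + 1 + 1) * c : ℕ) : ℕ∞)
          = 2 * ((t + 1) * c : ℕ) + (t * (t + 1) * c : ℕ) := by push_cast; ring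
        _ ≤ 2 * ((t + 1) * c : ℕ) + 2 * L (t * c) := by gcongr
        _ ≤ 2 * L ((t + 1) * c) := by rw [← mul_add]; gcongr
  have h := (hgrowth (2 * n + 1)).trans (mul_le_mul_right (hup _) 2)
  norm_cast at h
  nlinarith

namespace Ideal

variable {R : Type*} [CommRing R]

theorem length_quotient_eq_colon_add_sup_span (I : Ideal R) (x : R) :
    Module.length R (R ⧸ I) =
      Module.length R (R ⧸ I.colon (span {x})) + Module.length R (R ⧸ (I ⊔ span {x})) := by
  let f : R ⧸ I.colon (span {x}) →ₗ[R] R ⧸ I :=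
    Submodule.mapQ _ _ (LinearMap.mul R R x) fun r hr ↦ by
      simpa [mul_comm] using Submodule.mem_colon_span_singleton.1 hr
  let g : R ⧸ I →ₗ[R] R ⧸ (I ⊔ span {x}) := Submodule.factor le_sup_left
  refine Module.length_eq_add_of_exact f g ?_ (Submodule.factor_surjective _) ?_
  · have : I.colon (span {x}) = Submodule.comap (LinearMap.mul R R x) I := by
      ext r; simp [mul_comm]
    rw [← LinearMap.ker_eq_bot, Submodule.ker_mapQ, ← this, Submodule.mkQ_map_self]
  · rintro ⟨r⟩
    change Submodule.Quotient.mk r = 0 ↔ _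
    rw [Submodule.Quotient.mk_eq_zero, Submodule.mem_sup]
    constructor
    · rintro ⟨i, hi, _, hy, rfl⟩
      obtain ⟨s, rfl⟩ := mem_span_singleton'.1 hy
      refine ⟨Submodule.Quotient.mk s, ?_⟩
      change Submodule.Quotient.mk (x * s) = Submodule.Quotient.mk (i + s * x)
      rw [Submodule.Quotient.eq]
      simpa [mul_comm] using neg_mem hi
    · rintro ⟨⟨s⟩, hs⟩
      change Submodule.Quotient.mk (x * s) = Submodule.Quotient.mk r at hs
      rw [Submodule.Quotient.eq] at hs
      exact ⟨r - x * s, by simpa using neg_mem hs, x * s, mem_span_singleton'.2 ⟨s, mul_comm _ _⟩,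
        by ring⟩

theorem length_quotient_le_of_le {I J : Ideal R} (h : I ≤ J) :
    Module.length R (R ⧸ J) ≤ Module.length R (R ⧸ I) :=
  Module.length_le_of_surjective _ (Submodule.factor_surjective h)

theorem length_quotient_le_one_of_isMaximal_le {m J : Ideal R} (hm : m.IsMaximal) (h : m ≤ J) :
    Module.length R (R ⧸ J) ≤ 1 := by
  have : IsSimpleModule R (R ⧸ m) := isSimpleModule_iff_isCoatom.2 hm.out
  simpa using length_quotient_le_of_le h

theorem length_quotient_le_sup_span_add_card {m : Ideal R} (hm : m.IsMaximal) (J : Ideal R)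
    (s : Finset R) (hs : m * span s ≤ J) :
    Module.length R (R ⧸ J) ≤ Module.length R (R ⧸ (J ⊔ span s)) + s.card := by
  classical
  induction s using Finset.induction_on with
  | empty => rw [Finset.coe_empty, span_empty, sup_bot_eq]; simp
  | insert a t hat ih =>
    have ht : m * span t ≤ J := le_trans (mul_mono_right (span_mono (by simp))) hs
    have hcolon : m ≤ (J ⊔ span t).colon (span {a}) := fun r hr ↦
      Submodule.mem_colon_span_singleton.2 <| Submodule.mem_sup_left <|
        hs (mul_mem_mul hr (subset_span (by simp)))
    have hsup : J ⊔ span t ⊔ span {a} = J ⊔ span ↑(insert a t) := by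
      rw [Finset.coe_insert, span_insert, sup_assoc, sup_comm (span (t : Set R))]
    calc Module.length R (R ⧸ J)
        ≤ Module.length R (R ⧸ (J ⊔ span t)) + t.card := ih ht
      _ = Module.length R (R ⧸ (J ⊔ span t).colon (span {a}))
          + Module.length R (R ⧸ (J ⊔ span ↑(insert a t))) + t.card := by
        rw [length_quotient_eq_colon_add_sup_span, hsup]
      _ ≤ 1 + Module.length R (R ⧸ (J ⊔ span ↑(insert a t))) + t.card := by
        gcongr; exact length_quotient_le_one_of_isMaximal_le hm hcolon
      _ = Module.length R (R ⧸ (J ⊔ span ↑(insert a t))) + (insert a t).card := by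
        rw [Finset.card_insert_of_notMem hat]; push_cast; ring

theorem length_quotient_pow_le {m : Ideal R} (hm : m.IsMaximal) {n : ℕ}
    (hgen : ∀ j, ∃ s : Finset R, s.card ≤ n ∧ m ^ j = span s) (K : ℕ) :
    Module.length R (R ⧸ m ^ K) ≤ n * K := by
  induction K with
  | zero => simp [Module.length_eq_zero]
  | succ K ih =>
    obtain ⟨s, hs, hK⟩ := hgen K
    have hsup : m ^ (K + 1) ⊔ span s = m ^ K := by
      rw [← hK]; exact sup_eq_right.2 (pow_le_pow_right K.le_succ)
    calc Module.length R (R ⧸ m ^ (K + 1))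
        ≤ Module.length R (R ⧸ (m ^ (K + 1) ⊔ span s)) + s.card :=
          length_quotient_le_sup_span_add_card hm _ s (by rw [← hK, pow_succ'])
      _ ≤ n * K + n := by rw [hsup]; gcongr
      _ = n * ↑(K + 1) := by push_cast; ring

theorem exists_colon_span_le_pow_sub [IsNoetherianRing R] [IsDomain R] (m : Ideal R) {x : R}
    (hx : x ≠ 0) : ∃ c, ∀ K, (m ^ K).colon (span {x}) ≤ m ^ (K - c) := by
  obtain ⟨c, hc⟩ := exists_pow_inf_eq_pow_smul m (span {x})
  refine ⟨c, fun K r hr ↦ ?_⟩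
  rcases lt_or_ge K c with hK | hK
  · rw [Nat.sub_eq_zero_of_le hK.le, pow_zero, one_eq_top]; exact Submodule.mem_top
  have hxr : x * r ∈ m ^ K ⊓ span {x} :=
    ⟨by simpa [mul_comm] using Submodule.mem_colon_span_singleton.1 hr,
      mul_mem_right _ _ (mem_span_singleton_self x)⟩
  have hAR : m ^ K ⊓ span {x} ≤ span {x} * m ^ (K - c) := by
    have h := hc K hK
    simp only [smul_eq_mul, mul_top] at h
    rw [h, mul_comm]
    exact mul_mono_left inf_le_right
  obtain ⟨z, hz, hzr⟩ := mem_span_singleton_mul.1 (hAR hxr)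
  rwa [← mul_left_cancel₀ hx hzr]

theorem le_length_quotient_of_strictAnti {I : ℕ → Ideal R} (hI : StrictAnti I) (K : ℕ) :
    (K : ℕ∞) ≤ Module.length R (R ⧸ I K) := by
  rw [Module.length_quotient]
  induction K with
  | zero => simp
  | succ K ih =>
    push_cast
    exact (add_le_add_left ih 1).trans (Order.coheight_add_one_le (hI K.lt_succ_self))

theorem exists_pow_le_span_sup_pow_succ [IsNoetherianRing R] [IsDomain R] {m : Ideal R}
    (hm : m.IsMaximal) {n : ℕ} (hgen : ∀ j, ∃ s : Finset R, s.card ≤ n ∧ m ^ j = span s)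
    {x : R} (hx : x ≠ 0) : ∃ k, m ^ k ≤ span {x} ⊔ m ^ (k + 1) := by
  by_contra! hstep
  have hanti : StrictAnti fun j ↦ span {x} ⊔ m ^ j := strictAnti_nat_of_succ_lt fun j ↦
    lt_of_le_of_ne (sup_le_sup_left (pow_le_pow_right j.le_succ) _)
      fun h ↦ hstep j (h ▸ le_sup_right)
  obtain ⟨c, hc⟩ := exists_colon_span_le_pow_sub m hx
  refine ENat.not_forall_le_mul_of_forall_add_le (L := fun K ↦ Module.length R (R ⧸ m ^ K))
    c.succ_pos (fun K ↦ ?_) n (length_quotient_pow_le hm hgen)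
  calc (K : ℕ∞) + Module.length R (R ⧸ m ^ (K - (c + 1)))
      ≤ Module.length R (R ⧸ (m ^ K).colon (span {x}))
          + Module.length R (R ⧸ (m ^ K ⊔ span {x})) := by
        rw [add_comm, sup_comm]
        gcongr
        · exact length_quotient_le_of_le <|
            (hc K).trans (pow_le_pow_right (Nat.sub_le_sub_left c.le_succ K))
        · exact le_length_quotient_of_strictAnti hanti K
    _ = Module.length R (R ⧸ m ^ K) := (length_quotient_eq_colon_add_sup_span _ _).symm

theorem le_of_pow_le_sup_pow_succ [IsNoetherianRing R] {p m : Ideal R} [p.IsPrime]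
    (hm : m ≠ ⊤) (hpm : p ≤ m) {k : ℕ} (hk : m ^ k ≤ p ⊔ m ^ (k + 1)) : m ≤ p := by
  set m' := m.map (Quotient.mk p)
  have hm' : m' ≠ ⊤ := fun h ↦ hm <| by
    rw [← comap_map_mk hpm]
    exact (congrArg (comap _) h).trans comap_top
  have hk' : m' ^ k ≤ m' ^ (k + 1) := by
    simpa [m', map_sup, Ideal.map_pow] using map_mono (f := Quotient.mk p) hk
  have hle : ∀ j, m' ^ k ≤ m' ^ j := by
    intro j
    rcases le_total j k with hj | hj
    · exact pow_le_pow_right hj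
    obtain ⟨i, rfl⟩ := Nat.exists_eq_add_of_le hj
    induction i with
    | zero => exact le_rfl
    | succ i ih =>
      calc m' ^ k ≤ m' ^ (k + 1) := hk'
        _ = m' * m' ^ k := pow_succ' _ _
        _ ≤ m' * m' ^ (k + i) := mul_mono_right (ih (by omega))
        _ = m' ^ (k + (i + 1)) := by rw [← pow_succ']; ring_nf
  have : m' ^ k = ⊥ := by
    rw [eq_bot_iff, ← iInf_pow_eq_bot_of_isDomain m' hm']
    exact le_iInf hle
  rw [← mk_ker (I := p), ← map_eq_bot_iff_le_ker]
  exact (pow_eq_zero_iff' |>.1 this).1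

end Ideal

theorem Ring.krullDimLE_one_of_forall_span_card_le {R : Type*} [CommRing R] [IsNoetherianRing R]
    [IsDomain R] {n : ℕ}
    (hgen : ∀ I : Ideal R, ∃ s : Finset R, s.card ≤ n ∧ I = Ideal.span s) :
    Ring.KrullDimLE 1 R := by
  refine Ring.krullDimLE_one_iff_of_noZeroDivisors.2 fun p hp0 hp ↦ ?_
  obtain ⟨m, hm, hpm⟩ := p.exists_le_maximal hp.ne_top
  obtain ⟨x, hxp, hx0⟩ := Submodule.exists_mem_ne_zero_of_ne_bot hp0
  obtain ⟨k, hk⟩ := Ideal.exists_pow_le_span_sup_pow_succ hm (fun j ↦ hgen (m ^ j)) hx0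
  have hmp : m ≤ p := Ideal.le_of_pow_le_sup_pow_succ hm.ne_top hpm <|
    hk.trans (sup_le_sup_right ((Ideal.span_singleton_le_iff_mem _).2 hxp) _)
  exact le_antisymm hpm hmp ▸ hm

theorem ringKrullDim_eq_one_of_not_isField {R : Type*} [CommRing R] [IsDomain R]
    [Ring.KrullDimLE 1 R] (h : ¬ IsField R) : ringKrullDim R = 1 := by
  refine eq_of_le_of_not_lt (Ring.krullDimLE_iff.1 ‹_›) fun h' ↦ h ?_
  have : Ring.KrullDimLE 0 R := Ring.krullDimLE_iff.2 (Order.le_of_lt_succ h')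
  exact Ring.KrullDimLE.isField_of_isDomain

/-- Cohen: An integral domain that is not a field, in which every ideal is
generated by at most `n` elements for some fixed `n`, is Noetherian of Krull dimension 1. -/
theorem stmt15 (R : Type*) [CommRing R] [IsDomain R] (hR : ¬ IsField R)
    (h : ∃ n : ℕ, ∀ I : Ideal R, ∃ s : Finset R, s.card ≤ n ∧ I = Ideal.span (s : Set R)) :
    IsNoetherianRing R ∧ ringKrullDim R = 1 := by
  obtain ⟨n, hgen⟩ := h
  have hnoeth : IsNoetherianRing R := (isNoetherianRing_iff_ideal_fg R).2 fun I ↦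
    let ⟨s, _, hs⟩ := hgen I; ⟨s, hs.symm⟩
  have := Ring.krullDimLE_one_of_forall_span_card_le hgen
  exact ⟨hnoeth, ringKrullDim_eq_one_of_not_isField hR⟩
end

section
/- Let ∂ be a nonzero ℚ-linear derivation on ℚ_p and E = {a ∈ ℤ_p : ∂a ∈ ℤ_p}. Then E is not open in the p-adic topology on ℚ_p: every nonempty p-adically open subset of ℚ_p contains a point not in E. Consequently the E-adic topology on ℚ_p strictly refines the p-adic topology. -/
/-!
`D` is additive and vanishes on `ℚ`, hence is `ℚ`-linear, so if it is nonzero, rescaling by `p⁻ⁿ`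
shows it is unbounded. It is also unbounded on every nonempty open set: translating by rationals, which it
kills, moves any point into that set, so a bound there would be a bound everywhere. Hence `E` has
empty interior. Since `E` is bounded and contains `0`, small multiples of `E` translated to a
point lie in any ball around it, so the `E`-adic topology is finer than the `p`-adic one; it is
strictly finer because `E` itself is `E`-adically open.
-/

/-- The basis of the `E`-adic topology on `ℚ_p` for a subset `E ⊆ ℚ_p`. -/
def adicBasis' {K : Type*} [Field K] (E : Set K) : Set (Set K) :=
  {U : Set K | ∃ α β : K, α ≠ 0 ∧ U = {x : K | ∃ r ∈ E, x = α * r + β}}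

section AdicTopology

variable {K : Type*} [NontriviallyNormedField K]

theorem self_mem_adicBasis' (E : Set K) : E ∈ adicBasis' E :=
  ⟨1, 0, one_ne_zero, by simp⟩

theorem generateFrom_adicBasis'_le {E : Set K} (h0 : (0 : K) ∈ E) (hE : Bornology.IsBounded E) :
    TopologicalSpace.generateFrom (adicBasis' E) ≤ (inferInstance : TopologicalSpace K) := by
  obtain ⟨R, hR⟩ := hE.subset_closedBall 0
  refine fun U hU =>
    (@isOpen_iff_forall_mem_open _ (TopologicalSpace.generateFrom _) _).2 fun x hx => ?_
  obtain ⟨ε, hε, hball⟩ := Metric.isOpen_iff.mp hU x hx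
  obtain ⟨α, hα0, hα⟩ := NormedField.exists_norm_lt K (div_pos hε (by positivity : 0 < |R| + 1))
  refine ⟨_, ?_, TopologicalSpace.isOpen_generateFrom_of_mem ⟨α, x, norm_pos_iff.mp hα0, rfl⟩,
    0, h0, by simp⟩
  rintro _ ⟨r, hr, rfl⟩
  refine hball ?_
  have hr' : ‖r‖ ≤ |R| := (mem_closedBall_zero_iff.mp (hR hr)).trans (le_abs_self R)
  rw [Metric.mem_ball, dist_eq_norm, add_sub_cancel_right, norm_mul]
  calc ‖α‖ * ‖r‖ ≤ ‖α‖ * (|R| + 1) := by gcongr; linarith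
    _ < ε := (lt_div_iff₀ (by positivity)).mp hα

end AdicTopology

theorem Padic.norm_ratCast_zpow_neg {p : ℕ} [Fact p.Prime] (n : ℕ) :
    ‖(((p : ℚ) ^ (-(n : ℤ)) : ℚ) : ℚ_[p])‖ = (p : ℝ) ^ n := by
  push_cast
  rw [Padic.norm_p_zpow, neg_neg, zpow_natCast]

namespace AddMonoidHom

variable {p : ℕ} [Fact p.Prime]

theorem norm_le_add_of_forall_mem_isOpen {F : Type*} [SeminormedAddCommGroup F]
    (f : ℚ_[p] →+ F) (hf : ∀ q : ℚ, f q = 0) {U : Set ℚ_[p]} (hU : IsOpen U) {y : ℚ_[p]}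
    (hy : y ∈ U) {C : ℝ} (hC : ∀ x ∈ U, ‖f x‖ ≤ C) (x : ℚ_[p]) : ‖f x‖ ≤ C + ‖f y‖ := by
  have hV : IsOpen ((fun z => y + x - z) ⁻¹' U) := hU.preimage (by fun_prop)
  obtain ⟨q, hq⟩ := (Padic.denseRange_ratCast p).exists_mem_open hV ⟨x, by simpa using hy⟩
  have hfx : f x = f (y + x - q) - f y := by
    rw [map_sub, map_add, hf]; abel
  rw [hfx]
  exact (norm_sub_le _ _).trans (by linarith [hC _ hq])

theorem exists_lt_norm_of_ne_zero {F : Type*} [NormedAddCommGroup F] [NormedSpace ℚ_[p] F]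
    {f : ℚ_[p] →+ F} (hf : f ≠ 0) (C : ℝ) : ∃ x, C < ‖f x‖ := by
  obtain ⟨t, ht⟩ := DFunLike.ne_iff.mp hf
  have hft : 0 < ‖f t‖ := norm_pos_iff.mpr ht
  have hp : 1 < (p : ℝ) := mod_cast (Fact.out : p.Prime).one_lt
  obtain ⟨n, hn⟩ := pow_unbounded_of_one_lt (C / ‖f t‖) hp
  refine ⟨(((p : ℚ) ^ (-(n : ℤ)) : ℚ) : ℚ_[p]) • t, ?_⟩
  rw [map_ratCast_smul f ℚ_[p] ℚ_[p], norm_smul, Padic.norm_ratCast_zpow_neg]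
  exact (div_lt_iff₀ hft).mp hn

theorem exists_mem_lt_norm_of_isOpen {F : Type*} [NormedAddCommGroup F] [NormedSpace ℚ_[p] F]
    {f : ℚ_[p] →+ F} (hf : ∀ q : ℚ, f q = 0) (hf0 : f ≠ 0) {U : Set ℚ_[p]} (hU : IsOpen U)
    (hUne : U.Nonempty) (C : ℝ) : ∃ x ∈ U, C < ‖f x‖ := by
  by_contra! hC
  obtain ⟨y, hy⟩ := hUne
  obtain ⟨x, hx⟩ := exists_lt_norm_of_ne_zero hf0 (C + ‖f y‖)
  exact hx.not_ge (f.norm_le_add_of_forall_mem_isOpen hf hU hy hC x)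

end AddMonoidHom

theorem stmt17_general (p : ℕ) [Fact p.Prime] (D : ℚ_[p] → ℚ_[p])
    (hadd : ∀ x y : ℚ_[p], D (x + y) = D x + D y)
    (hQ : ∀ q : ℚ, D (q : ℚ_[p]) = 0)
    (hne : D ≠ 0) :
    (∀ U : Set ℚ_[p], IsOpen U → U.Nonempty →
      ∃ x ∈ U, ¬ (‖x‖ ≤ 1 ∧ ‖D x‖ ≤ 1)) ∧
    TopologicalSpace.generateFrom (adicBasis' {a : ℚ_[p] | ‖a‖ ≤ 1 ∧ ‖D a‖ ≤ 1})
      < (inferInstance : TopologicalSpace ℚ_[p]) := by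
  set E : Set ℚ_[p] := {a | ‖a‖ ≤ 1 ∧ ‖D a‖ ≤ 1}
  set f : ℚ_[p] →+ ℚ_[p] := AddMonoidHom.mk' D hadd
  have hf0 : f ≠ 0 := fun h => hne (funext (DFunLike.congr_fun h))
  have hE_interior : ∀ U : Set ℚ_[p], IsOpen U → U.Nonempty → ∃ x ∈ U, x ∉ E := by
    intro U hU hUne
    obtain ⟨x, hx, h1⟩ := f.exists_mem_lt_norm_of_isOpen hQ hf0 hU hUne 1
    exact ⟨x, hx, fun hxE => h1.not_ge hxE.2⟩
  have hD0 : D 0 = 0 := by simpa using hQ 0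
  have h0E : (0 : ℚ_[p]) ∈ E := ⟨by simp, by simp [hD0]⟩
  have hE_bdd : Bornology.IsBounded E :=
    Metric.isBounded_closedBall.subset fun a ha => mem_closedBall_zero_iff.mpr ha.1
  refine ⟨hE_interior, (generateFrom_adicBasis'_le h0E hE_bdd).lt_of_ne fun heq => ?_⟩
  have hE_open : IsOpen E := by
    have h := TopologicalSpace.isOpen_generateFrom_of_mem (self_mem_adicBasis' E)
    rwa [heq] at h
  obtain ⟨x, hx, hxE⟩ := hE_interior E hE_open ⟨0, h0E⟩
  exact hxE hx

/-- For a nonzero ℚ-linear derivation `∂` on `ℚ_p` and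
`E = {a ∈ ℤ_p : ∂a ∈ ℤ_p}`, the set `E` is not `p`-adically open (every nonempty
`p`-adically open set contains a point outside `E`), and the `E`-adic topology on `ℚ_p`
strictly refines the `p`-adic topology. -/
theorem stmt17 (p : ℕ) [Fact p.Prime] (D : ℚ_[p] → ℚ_[p])
    (hadd : ∀ x y : ℚ_[p], D (x + y) = D x + D y)
    (hmul : ∀ x y : ℚ_[p], D (x * y) = x * D y + y * D x)
    (hQ : ∀ q : ℚ, D (q : ℚ_[p]) = 0)
    (hne : D ≠ 0) :
    (∀ U : Set ℚ_[p], IsOpen U → U.Nonempty →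
      ∃ x ∈ U, ¬ (‖x‖ ≤ 1 ∧ ‖D x‖ ≤ 1)) ∧
    TopologicalSpace.generateFrom (adicBasis' {a : ℚ_[p] | ‖a‖ ≤ 1 ∧ ‖D a‖ ≤ 1})
      < (inferInstance : TopologicalSpace ℚ_[p]) :=
  stmt17_general p D hadd hQ hne
end

section
/- Let ∂ be a nonzero ℚ-linear derivation on ℚ_p and E = {a ∈ ℤ_p : ∂a ∈ ℤ_p}. The map τ : E → ℤ_p[x]/(x²) given by τ(a) = a + (∂a)x is an injective ring homomorphism whose image is dense (for the topology on ℤ_p[x]/(x²) induced by the product topology on ℤ_p²). -/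
/-!
Pick `u` with `∂u ≠ 0`. Since `∂` kills `ℚ`, the graph of `∂` contains `(r + s (u - q), s ∂u)` for
all `r, s, q ∈ ℚ`. These points are the image of the dense set `ℚ³ ⊆ ℚ_p³` under a continuous
surjection `ℚ_p³ → ℚ_p²`, so the graph is dense in `ℚ_p²`. As `ℤ_p²` is open in `ℚ_p²`, the graph
points lying in `ℤ_p²`, which form the image of `τ`, are dense there.
-/

theorem Derivation.denseRange_graph {K : Type*} [Field K] [CharZero K] [TopologicalSpace K]
    [IsTopologicalRing K] (hℚ : DenseRange ((↑) : ℚ → K)) (D : Derivation ℚ K K) (hD : D ≠ 0) :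
    DenseRange fun x => (x, D x) := by
  obtain ⟨u, hu⟩ : ∃ u, D u ≠ 0 := not_forall.mp fun h => hD (Derivation.ext h)
  let F : K × K × K → K × K := fun v => (v.1 + v.2.1 * (u - v.2.2), v.2.1 * D u)
  have hF : Function.Surjective F := fun ab => ⟨(ab.1, ab.2 / D u, u), by simp [F, hu]⟩
  have hF_cont : Continuous F := by fun_prop
  have hdense : DenseRange (F ∘ Prod.map (↑) (Prod.map (↑) (↑)) : ℚ × ℚ × ℚ → K × K) :=
    hF.denseRange.comp (hℚ.prodMap (hℚ.prodMap hℚ)) hF_cont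
  refine hdense.mono ?_
  rintro _ ⟨⟨r, s, q⟩, rfl⟩
  refine ⟨r + s * (u - q), ?_⟩
  have hD_ratCast : ∀ t : ℚ, D t = 0 := fun t => by simpa using D.map_algebraMap t
  simp [F, D.leibniz, hD_ratCast]

namespace PadicInt

variable {p : ℕ} [Fact p.Prime] (D : Derivation ℚ ℚ_[p] ℚ_[p]) {S : Subring ℚ_[p]}
  (hS : ∀ x ∈ S, ‖x‖ ≤ 1 ∧ ‖D x‖ ≤ 1)

theorem dualNumber_ext {x y : DualNumber ℤ_[p]} (h₁ : (x.fst : ℚ_[p]) = y.fst)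
    (h₂ : (x.snd : ℚ_[p]) = y.snd) : x = y :=
  TrivSqZeroExt.ext (PadicInt.ext h₁) (PadicInt.ext h₂)

noncomputable def toDualNumber (a : S) : DualNumber ℤ_[p] :=
  (⟨a, (hS a a.2).1⟩, ⟨D a, (hS a a.2).2⟩)

@[simp]
theorem coe_fst_toDualNumber (a : S) : ((toDualNumber D hS a).fst : ℚ_[p]) = a := rfl

@[simp]
theorem coe_snd_toDualNumber (a : S) : ((toDualNumber D hS a).snd : ℚ_[p]) = D a := rfl

noncomputable def dualNumberHom : S →+* DualNumber ℤ_[p] where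
  toFun := toDualNumber D hS
  map_one' := dualNumber_ext (by simp) (by simp)
  map_mul' a b := dualNumber_ext (by simp) (by simp [D.leibniz]; ring)
  map_zero' := dualNumber_ext (by simp) (by simp)
  map_add' a b := dualNumber_ext (by simp) (by simp)

theorem dualNumberHom_injective : Function.Injective (dualNumberHom D hS) :=
  fun _ _ h => Subtype.ext (congrArg (fun z => (z.fst : ℚ_[p])) h)

theorem denseRange_dualNumberHom (hE : ∀ x, ‖x‖ ≤ 1 → ‖D x‖ ≤ 1 → x ∈ S)
    (hD : DenseRange fun x => (x, D x)) :
    DenseRange fun a => ((dualNumberHom D hS a).fst, (dualNumberHom D hS a).snd) := by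
  have hopen : IsOpenMap (Prod.map ((↑) : ℤ_[p] → ℚ_[p]) ((↑) : ℤ_[p] → ℚ_[p])) :=
    isOpenEmbedding_coe.isOpenMap.prodMap isOpenEmbedding_coe.isOpenMap
  refine (hD.preimage hopen).mono ?_
  rintro ⟨a, b⟩ ⟨x, hx⟩
  obtain ⟨rfl, hDx⟩ : x = a ∧ D x = b := Prod.mk.inj hx
  exact ⟨⟨a, hE a a.2 (hDx ▸ b.2)⟩, Prod.ext (PadicInt.ext rfl) (PadicInt.ext hDx)⟩

end PadicInt

theorem stmt18_general (p : ℕ) [Fact p.Prime] (D : ℚ_[p] → ℚ_[p])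
    (hadd : ∀ x y : ℚ_[p], D (x + y) = D x + D y)
    (hmul : ∀ x y : ℚ_[p], D (x * y) = x * D y + y * D x)
    (hne : D ≠ 0)
    (S : Subring ℚ_[p]) (hS : (S : Set ℚ_[p]) = {x : ℚ_[p] | ‖x‖ ≤ 1 ∧ ‖D x‖ ≤ 1}) :
    ∃ τ : S →+* DualNumber ℤ_[p],
      Function.Injective τ ∧
      (∀ a : S, ((TrivSqZeroExt.fst (τ a) : ℤ_[p]) : ℚ_[p]) = (a : ℚ_[p]) ∧
        ((TrivSqZeroExt.snd (τ a) : ℤ_[p]) : ℚ_[p]) = D (a : ℚ_[p])) ∧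
      DenseRange (fun a : S =>
        ((TrivSqZeroExt.fst (τ a), TrivSqZeroExt.snd (τ a)) : ℤ_[p] × ℤ_[p])) := by
  let D' : Derivation ℚ ℚ_[p] ℚ_[p] :=
    Derivation.mk' (AddMonoidHom.mk' D hadd).toRatLinearMap fun a b => by simpa using hmul a b
  have hD' : D' ≠ 0 := fun h => hne (congrArg DFunLike.coe h)
  have hS' (x : ℚ_[p]) : x ∈ S ↔ ‖x‖ ≤ 1 ∧ ‖D x‖ ≤ 1 := by rw [← SetLike.mem_coe, hS]; rfl
  refine ⟨PadicInt.dualNumberHom D' fun x hx => (hS' x).1 hx,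
    PadicInt.dualNumberHom_injective _ _, fun _ => ⟨rfl, rfl⟩, ?_⟩
  exact PadicInt.denseRange_dualNumberHom D' _ (fun x h₁ h₂ => (hS' x).2 ⟨h₁, h₂⟩)
    (D'.denseRange_graph (Padic.denseRange_ratCast p) hD')

/-- For a nonzero ℚ-linear derivation `∂` on `ℚ_p` and
`E = {a ∈ ℤ_p : ∂a ∈ ℤ_p}` (realized as a subring `S` of `ℚ_p`), the map
`τ : E → ℤ_p[x]/(x²)`, `τ(a) = a + (∂a)x`, is an injective ring homomorphism with dense
image (identifying `ℤ_p[x]/(x²)` with `ℤ_p²` via `a + bx ↦ (a, b)`). -/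
theorem stmt18 (p : ℕ) [Fact p.Prime] (D : ℚ_[p] → ℚ_[p])
    (hadd : ∀ x y : ℚ_[p], D (x + y) = D x + D y)
    (hmul : ∀ x y : ℚ_[p], D (x * y) = x * D y + y * D x)
    (hQ : ∀ q : ℚ, D (q : ℚ_[p]) = 0)
    (hne : D ≠ 0)
    (S : Subring ℚ_[p]) (hS : (S : Set ℚ_[p]) = {x : ℚ_[p] | ‖x‖ ≤ 1 ∧ ‖D x‖ ≤ 1}) :
    ∃ τ : S →+* DualNumber ℤ_[p],
      Function.Injective τ ∧
      (∀ a : S, ((TrivSqZeroExt.fst (τ a) : ℤ_[p]) : ℚ_[p]) = (a : ℚ_[p]) ∧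
        ((TrivSqZeroExt.snd (τ a) : ℤ_[p]) : ℚ_[p]) = D (a : ℚ_[p])) ∧
      DenseRange (fun a : S =>
        ((TrivSqZeroExt.fst (τ a), TrivSqZeroExt.snd (τ a)) : ℤ_[p] × ℤ_[p])) :=
  stmt18_general p D hadd hmul hne S hS
end
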